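/- arXiv:2204.11456 — 2 statements merged into one kernel-verified Lean document; each statement's English description precedes it below -/
import Mathlib

section
/- Let Ω ⊂ ℝ^d be a measurable set of finite measure and p ∈ (0,1). If (u_k) is a sequence in L¹(Ω) with u_k → u in L¹(Ω) and (ε_k) is a sequence of nonnegative reals with ε_k → ε ≥ 0, then ∫_Ω ψ_{ε_k}(u_k(x)²) dx → ∫_Ω ψ_ε(u(x)²) dx, where ψ_0(t) := t^(p/2). -/
open Set MeasureTheory Filter Topology

noncomputable def psiSm (p ε t : ℝ) : ℝ :=
  if t < ε ^ 2 then (p / 2) * t / ε ^ (2 - p) + (1 - p / 2) * ε ^ p else t ^ (p / 2)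

/-!
For `0 < p ≤ 1` the map `s ↦ ψ_ε(s²)` is `p`-Hölder with constant `1`, uniformly in `ε`, so
`∫ |ψ_{ε_k}(u_k²) - ψ_{ε_k}(u²)| ≤ ∫ |u_k - u|^p`; on a set of finite measure the right-hand side
tends to `0` when `u_k → u` in `L¹`, because `r^p ≤ δ^p + δ^(p-1) r` for every `δ > 0`.
The remaining term `∫ ψ_{ε_k}(u²) → ∫ ψ_ε(u²)` by dominated convergence: `ε ↦ ψ_ε(t)` is
continuous on `[0, ∞)` and `0 ≤ ψ_ε(t) ≤ ε^p + t^(p/2)`.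
-/

/-- The tangent line of the concave map `t ↦ t ^ (p / 2)` at `t = ε ^ 2`: below `ε ^ 2`, `psiSm`
replaces the power by this line. -/
noncomputable def psiLin (p ε t : ℝ) : ℝ :=
  p / 2 * t / ε ^ (2 - p) + (1 - p / 2) * ε ^ p

section Real

variable {p ε t : ℝ}

lemma psiSm_of_lt (h : t < ε ^ 2) : psiSm p ε t = psiLin p ε t := if_pos h

lemma psiSm_of_le (h : ε ^ 2 ≤ t) : psiSm p ε t = t ^ (p / 2) := if_neg h.not_gt

lemma psiSm_zero (ht : 0 ≤ t) : psiSm p 0 t = t ^ (p / 2) :=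
  psiSm_of_le (by simpa using ht)

lemma sq_rpow_half (x : ℝ) : (x ^ 2) ^ (p / 2) = |x| ^ p := by
  rw [← sq_abs, ← Real.rpow_natCast, ← Real.rpow_mul (abs_nonneg x)]
  congr 1
  ring

lemma rpow_two_sub_mul_rpow (hε : 0 < ε) : ε ^ (2 - p) * ε ^ p = ε ^ 2 := by
  rw [← Real.rpow_add hε, sub_add_cancel, Real.rpow_two]

lemma psiLin_sq_self (hε : 0 < ε) : psiLin p ε (ε ^ 2) = ε ^ p := by
  have := (Real.rpow_pos_of_pos hε (2 - p)).ne'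
  rw [psiLin, ← rpow_two_sub_mul_rpow hε]
  field_simp
  ring

lemma psiLin_mono (hp : 0 ≤ p) (hε : 0 < ε) : Monotone (psiLin p ε) := fun s t hst => by
  have := Real.rpow_pos_of_pos hε (2 - p)
  unfold psiLin
  gcongr

lemma psiLin_le_rpow (hp : 0 ≤ p) (hε : 0 < ε) (ht : t ≤ ε ^ 2) : psiLin p ε t ≤ ε ^ p :=
  psiLin_sq_self (p := p) hε ▸ psiLin_mono hp hε ht

lemma rpow_le_psiLin (hp : 0 ≤ p) (hp2 : p ≤ 2) (hε : 0 < ε) (ht : 0 ≤ t) :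
    t ^ (p / 2) ≤ psiLin p ε t := by
  have hε2 : 0 < ε ^ 2 := by positivity
  have amgm := Real.geom_mean_le_arith_mean2_weighted (by linarith : 0 ≤ p / 2)
    (by linarith : 0 ≤ 1 - p / 2) (div_nonneg ht hε2.le) zero_le_one (by ring)
  rw [Real.one_rpow, mul_one, mul_one] at amgm
  calc t ^ (p / 2) = (t / ε ^ 2) ^ (p / 2) * ε ^ p := by
        rw [Real.div_rpow ht hε2.le, sq_rpow_half, abs_of_pos hε]
        field_simp
    _ ≤ (p / 2 * (t / ε ^ 2) + (1 - p / 2)) * ε ^ p := by gcongr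
    _ = psiLin p ε t := by
        have := (Real.rpow_pos_of_pos hε (2 - p)).ne'
        rw [psiLin, ← rpow_two_sub_mul_rpow hε]
        field_simp

lemma pos_of_lt_sq (hε : 0 ≤ ε) (ht : 0 ≤ t) (h : t < ε ^ 2) : 0 < ε :=
  lt_of_pow_lt_pow_left₀ 2 hε (by simpa using ht.trans_lt h)

lemma rpow_le_psiSm (hp : 0 ≤ p) (hp2 : p ≤ 2) (hε : 0 ≤ ε) (ht : 0 ≤ t) :
    t ^ (p / 2) ≤ psiSm p ε t := by
  rcases lt_or_ge t (ε ^ 2) with h | h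
  · rw [psiSm_of_lt h]
    exact rpow_le_psiLin hp hp2 (pos_of_lt_sq hε ht h) ht
  · rw [psiSm_of_le h]

lemma psiSm_le_rpow_add_rpow (hp : 0 ≤ p) (hε : 0 ≤ ε) (ht : 0 ≤ t) :
    psiSm p ε t ≤ ε ^ p + t ^ (p / 2) := by
  rcases lt_or_ge t (ε ^ 2) with h | h
  · rw [psiSm_of_lt h]
    linarith [psiLin_le_rpow hp (pos_of_lt_sq hε ht h) h.le, Real.rpow_nonneg ht (p / 2)]
  · rw [psiSm_of_le h]
    linarith [Real.rpow_nonneg hε p]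

lemma norm_psiSm_sq_le (hp : 0 ≤ p) (hp2 : p ≤ 2) (hε : 0 ≤ ε) (a : ℝ) :
    ‖psiSm p ε (a ^ 2)‖ ≤ ε ^ p + |a| ^ p := by
  have hlow := rpow_le_psiSm hp hp2 hε (sq_nonneg a)
  rw [Real.norm_of_nonneg ((Real.rpow_nonneg (sq_nonneg a) _).trans hlow), ← sq_rpow_half]
  exact psiSm_le_rpow_add_rpow hp hε (sq_nonneg a)

lemma mul_rpow_sub_one_le_rpow {c : ℝ} (hp : p ≤ 1) (hc : 0 ≤ c) (hcε : c ≤ ε) :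
    c * ε ^ (p - 1) ≤ c ^ p := by
  rcases hc.eq_or_lt with rfl | hc
  · simpa using Real.rpow_nonneg le_rfl p
  · calc c * ε ^ (p - 1) ≤ c * c ^ (p - 1) :=
          mul_le_mul_of_nonneg_left (Real.rpow_le_rpow_of_nonpos hc hcε (by linarith)) hc.le
      _ = c ^ p := by
          rw [Real.rpow_sub_one hc.ne']
          field_simp

lemma rpow_le_rpow_add_rpow_sub_one_mul {r δ : ℝ} (hp0 : 0 ≤ p) (hp1 : p ≤ 1) (hδ : 0 < δ)
    (hr : 0 ≤ r) : r ^ p ≤ δ ^ p + δ ^ (p - 1) * r := by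
  rcases le_total r δ with h | h
  · have := Real.rpow_le_rpow hr h hp0
    have := Real.rpow_nonneg hδ.le (p - 1)
    nlinarith
  · calc r ^ p = r ^ (p - 1) * r := by
          rw [Real.rpow_sub_one (hδ.trans_le h).ne', div_mul_cancel₀ _ (hδ.trans_le h).ne']
      _ ≤ δ ^ (p - 1) * r :=
          mul_le_mul_of_nonneg_right (Real.rpow_le_rpow_of_nonpos hδ h (by linarith)) hr
      _ ≤ δ ^ p + δ ^ (p - 1) * r := le_add_of_nonneg_left (Real.rpow_nonneg hδ.le p)

lemma psiLin_sq_sub_psiLin_sq_le (hp0 : 0 < p) (hp1 : p ≤ 1) (hε : 0 < ε) {a b : ℝ} (ha : 0 ≤ a)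
    (hb : 0 ≤ b) (haε : a < ε) (hbε : b < ε) :
    psiLin p ε (a ^ 2) - psiLin p ε (b ^ 2) ≤ |a - b| ^ p := by
  have hε2p := Real.rpow_pos_of_pos hε (2 - p)
  have hdiff : (a + b) * (a - b) ≤ 2 * ε * |a - b| := by
    calc (a + b) * (a - b) ≤ (a + b) * |a - b| := by gcongr; exact le_abs_self _
      _ ≤ 2 * ε * |a - b| := by gcongr; linarith
  have hεp : ε / ε ^ (2 - p) = ε ^ (p - 1) := by
    rw [div_eq_iff hε2p.ne', ← Real.rpow_add hε, show p - 1 + (2 - p) = 1 by ring, Real.rpow_one]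
  calc psiLin p ε (a ^ 2) - psiLin p ε (b ^ 2) = p / 2 * ((a + b) * (a - b)) / ε ^ (2 - p) := by
        unfold psiLin; ring
    _ ≤ p / 2 * (2 * ε * |a - b|) / ε ^ (2 - p) := by gcongr
    _ = p * (|a - b| * ε ^ (p - 1)) := by rw [← hεp]; ring
    _ ≤ 1 * |a - b| ^ p := by
        gcongr
        exact mul_rpow_sub_one_le_rpow hp1 (abs_nonneg _)
          (abs_sub_lt_iff.2 ⟨by linarith, by linarith⟩).le
    _ = |a - b| ^ p := one_mul _

lemma psiSm_sq_sub_psiSm_sq_le (hp0 : 0 < p) (hp1 : p ≤ 1) (hε : 0 ≤ ε) {a b : ℝ} (ha : 0 ≤ a)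
    (hb : 0 ≤ b) : psiSm p ε (a ^ 2) - psiSm p ε (b ^ 2) ≤ |a - b| ^ p := by
  have hb_le : b ^ p ≤ psiSm p ε (b ^ 2) := by
    simpa [sq_rpow_half, abs_of_nonneg hb] using
      rpow_le_psiSm hp0.le (by linarith) hε (sq_nonneg b)
  rcases le_or_gt ε a with hεa | haε
  · rw [psiSm_of_le (pow_le_pow_left₀ hε hεa 2), sq_rpow_half, abs_of_nonneg ha,
      sub_le_iff_le_add']
    calc a ^ p ≤ (b + |a - b|) ^ p :=
          Real.rpow_le_rpow ha (by linarith [le_abs_self (a - b)]) hp0.le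
      _ ≤ b ^ p + |a - b| ^ p := Real.rpow_add_le_add_rpow hb (abs_nonneg _) hp0.le hp1
      _ ≤ psiSm p ε (b ^ 2) + |a - b| ^ p := by gcongr
  have hεpos : 0 < ε := ha.trans_lt haε
  rw [psiSm_of_lt (pow_lt_pow_left₀ haε ha two_ne_zero)]
  rcases le_or_gt ε b with hεb | hbε
  · have := psiLin_le_rpow hp0.le hεpos (pow_le_pow_left₀ ha haε.le 2)
    have := Real.rpow_le_rpow hε hεb hp0.le
    have := Real.rpow_nonneg (abs_nonneg (a - b)) p
    linarith
  · rw [psiSm_of_lt (pow_lt_pow_left₀ hbε hb two_ne_zero)]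
    exact psiLin_sq_sub_psiLin_sq_le hp0 hp1 hεpos ha hb haε hbε

lemma abs_psiSm_sq_sub_psiSm_sq_le (hp0 : 0 < p) (hp1 : p ≤ 1) (hε : 0 ≤ ε) (a b : ℝ) :
    |psiSm p ε (a ^ 2) - psiSm p ε (b ^ 2)| ≤ |a - b| ^ p := by
  have key (x y : ℝ) : psiSm p ε (x ^ 2) - psiSm p ε (y ^ 2) ≤ |x - y| ^ p := by
    simpa only [sq_abs] using
      (psiSm_sq_sub_psiSm_sq_le hp0 hp1 hε (abs_nonneg x) (abs_nonneg y)).trans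
        (Real.rpow_le_rpow (abs_nonneg _) (abs_abs_sub_abs_le_abs_sub x y) hp0.le)
  exact abs_sub_le_iff.2 ⟨key a b, abs_sub_comm a b ▸ key b a⟩

lemma measurable_psiSm (p ε : ℝ) : Measurable (psiSm p ε) :=
  Measurable.ite measurableSet_Iio (by fun_prop) (by fun_prop)

lemma continuousOn_psiSm_Ioi (p t : ℝ) : ContinuousOn (fun ε => psiSm p ε t) (Ioi 0) := by
  refine ContinuousOn.if (fun ε ⟨hε, hfr⟩ => ?_) ?_ continuousOn_const
  · have ht : t = ε ^ 2 := frontier_lt_subset_eq continuous_const (continuous_pow 2) hfr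
    rw [ht, sq_rpow_half, abs_of_pos hε]
    exact psiLin_sq_self hε
  · refine ContinuousOn.mono (fun ε (hε : 0 < ε) => ContinuousAt.continuousWithinAt ?_)
      inter_subset_left
    have := Real.rpow_pos_of_pos hε (2 - p)
    fun_prop (disch := simp [hε.ne', this.ne'])

lemma continuousWithinAt_psiSm (hp : 0 < p) (hp2 : p ≤ 2) (ht : 0 ≤ t) {ε₀ : ℝ} (hε₀ : 0 ≤ ε₀) :
    ContinuousWithinAt (fun ε => psiSm p ε t) (Ici 0) ε₀ := by
  rcases hε₀.eq_or_lt with rfl | hpos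
  · have hlim : Tendsto (fun ε : ℝ => ε ^ p + t ^ (p / 2)) (𝓝 0) (𝓝 (t ^ (p / 2))) := by
      simpa [Real.zero_rpow hp.ne'] using
        ((Real.continuous_rpow_const hp.le).tendsto 0).add (tendsto_const_nhds (x := t ^ (p / 2)))
    rw [ContinuousWithinAt, psiSm_zero ht]
    refine tendsto_of_tendsto_of_tendsto_of_le_of_le' tendsto_const_nhds
      (hlim.mono_left nhdsWithin_le_nhds) ?_ ?_ <;>
      filter_upwards [self_mem_nhdsWithin] with ε hε
    · exact rpow_le_psiSm hp.le hp2 hε ht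
    · exact psiSm_le_rpow_add_rpow hp.le hε ht
  · exact ((continuousOn_psiSm_Ioi p t).continuousAt (Ioi_mem_nhds hpos)).continuousWithinAt

end Real

section Integral

variable {α ι : Type*} [MeasurableSpace α] {μ : Measure α} [IsFiniteMeasure μ] {p : ℝ}
  {l : Filter ι}

lemma MeasureTheory.Integrable.abs_rpow {f : α → ℝ} (hf : Integrable f μ) (hp0 : 0 ≤ p)
    (hp1 : p ≤ 1) : Integrable (fun x => |f x| ^ p) μ := by
  simpa [ENNReal.toReal_ofReal hp0] using
    ((memLp_one_iff_integrable.2 hf).mono_exponent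
      (ENNReal.ofReal_le_one.2 hp1)).integrable_norm_rpow'

lemma integral_abs_rpow_le {f : α → ℝ} (hf : Integrable f μ) (hp0 : 0 ≤ p) (hp1 : p ≤ 1)
    {δ : ℝ} (hδ : 0 < δ) :
    ∫ x, |f x| ^ p ∂μ ≤ δ ^ p * μ.real univ + δ ^ (p - 1) * ∫ x, |f x| ∂μ := by
  calc ∫ x, |f x| ^ p ∂μ ≤ ∫ x, (δ ^ p + δ ^ (p - 1) * |f x|) ∂μ :=
        integral_mono (hf.abs_rpow hp0 hp1) ((integrable_const _).add (hf.abs.const_mul _))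
          fun x => rpow_le_rpow_add_rpow_sub_one_mul hp0 hp1 hδ (abs_nonneg _)
    _ = δ ^ p * μ.real univ + δ ^ (p - 1) * ∫ x, |f x| ∂μ := by
        rw [integral_add (integrable_const _) (hf.abs.const_mul _), integral_const,
          integral_const_mul, smul_eq_mul, mul_comm]

lemma tendsto_integral_abs_rpow_of_tendsto_integral_abs {f : ι → α → ℝ}
    (hf : ∀ k, Integrable (f k) μ) (hp0 : 0 < p) (hp1 : p ≤ 1)
    (h : Tendsto (fun k => ∫ x, |f k x| ∂μ) l (𝓝 0)) :
    Tendsto (fun k => ∫ x, |f k x| ^ p ∂μ) l (𝓝 0) := by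
  refine tendsto_order.2 ⟨fun a ha => .of_forall fun k =>
    ha.trans_le (integral_nonneg fun x => by positivity), fun η hη => ?_⟩
  have hsmall : Tendsto (fun δ : ℝ => δ ^ p * μ.real univ) (𝓝 0) (𝓝 0) := by
    simpa [Real.zero_rpow hp0.ne'] using
      ((Real.continuous_rpow_const hp0.le).tendsto 0).mul_const (μ.real univ)
  obtain ⟨δ, hδη, hδ⟩ := (((hsmall.mono_left nhdsWithin_le_nhds).eventually (gt_mem_nhds hη)).and
    (self_mem_nhdsWithin : ∀ᶠ δ in 𝓝[>] (0 : ℝ), 0 < δ)).exists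
  have hlim : Tendsto (fun k => δ ^ p * μ.real univ + δ ^ (p - 1) * ∫ x, |f k x| ∂μ) l
      (𝓝 (δ ^ p * μ.real univ)) := by
    simpa using tendsto_const_nhds.add (h.const_mul (δ ^ (p - 1)))
  filter_upwards [hlim.eventually (gt_mem_nhds hδη)] with k hk
  exact (integral_abs_rpow_le (hf k) hp0.le hp1 hδ).trans_lt hk

lemma MeasureTheory.Integrable.psiSm_sq {f : α → ℝ} {ε : ℝ} (hf : Integrable f μ) (hp0 : 0 ≤ p)
    (hp1 : p ≤ 1) (hε : 0 ≤ ε) : Integrable (fun x => psiSm p ε (f x ^ 2)) μ :=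
  ((integrable_const _).add (hf.abs_rpow hp0 hp1)).mono'
    ((measurable_psiSm p ε).comp_aemeasurable (hf.aemeasurable.pow_const 2)).aestronglyMeasurable
    (.of_forall fun x => norm_psiSm_sq_le hp0 (by linarith) hε (f x))

lemma tendsto_integral_psiSm_sq_of_tendsto [l.IsCountablyGenerated] {f : α → ℝ} {ε : ι → ℝ}
    {ε₀ : ℝ} (hf : Integrable f μ) (hp0 : 0 < p) (hp1 : p ≤ 1) (hε : ∀ k, 0 ≤ ε k) (hε₀ : 0 ≤ ε₀)
    (hlim : Tendsto ε l (𝓝 ε₀)) :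
    Tendsto (fun k => ∫ x, psiSm p (ε k) (f x ^ 2) ∂μ) l (𝓝 (∫ x, psiSm p ε₀ (f x ^ 2) ∂μ)) := by
  refine tendsto_integral_filter_of_dominated_convergence (fun x => (ε₀ + 1) ^ p + |f x| ^ p)
    (.of_forall fun k => (hf.psiSm_sq hp0.le hp1 (hε k)).aestronglyMeasurable) ?_
    ((integrable_const _).add (hf.abs_rpow hp0.le hp1)) (.of_forall fun x => ?_)
  · filter_upwards [hlim.eventually (gt_mem_nhds (lt_add_one ε₀))] with k hk
    refine .of_forall fun x => (norm_psiSm_sq_le hp0.le (by linarith) (hε k) (f x)).trans ?_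
    gcongr
    exact hε k
  · exact (continuousWithinAt_psiSm hp0 (by linarith) (sq_nonneg _) hε₀).tendsto.comp
      (tendsto_nhdsWithin_iff.2 ⟨hlim, .of_forall hε⟩)

lemma tendsto_integral_psiSm_sq_sub {f : ι → α → ℝ} {g : α → ℝ} {ε : ι → ℝ}
    (hf : ∀ k, Integrable (f k) μ) (hg : Integrable g μ) (hp0 : 0 < p) (hp1 : p ≤ 1)
    (hε : ∀ k, 0 ≤ ε k) (h : Tendsto (fun k => ∫ x, |f k x - g x| ∂μ) l (𝓝 0)) :
    Tendsto (fun k => ∫ x, psiSm p (ε k) (f k x ^ 2) ∂μ - ∫ x, psiSm p (ε k) (g x ^ 2) ∂μ) l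
      (𝓝 0) := by
  refine squeeze_zero_norm (fun k => ?_)
    (tendsto_integral_abs_rpow_of_tendsto_integral_abs (fun k => (hf k).sub hg) hp0 hp1 h)
  rw [← integral_sub ((hf k).psiSm_sq hp0.le hp1 (hε k)) (hg.psiSm_sq hp0.le hp1 (hε k))]
  exact (norm_integral_le_integral_norm _).trans <|
    integral_mono_of_nonneg (.of_forall fun x => norm_nonneg _)
      (((hf k).sub hg).abs_rpow hp0.le hp1)
      (.of_forall fun x => abs_psiSm_sq_sub_psiSm_sq_le hp0 hp1 (hε k) _ _)

end Integral

theorem stmt7_general (d : ℕ) (Ω : Set (Fin d → ℝ))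
    (hfin : volume Ω < ⊤) (p : ℝ) (hp : 0 < p) (hp1 : p < 1)
    (u : ℕ → (Fin d → ℝ) → ℝ) (ulim : (Fin d → ℝ) → ℝ)
    (hint : ∀ k, IntegrableOn (u k) Ω) (hintl : IntegrableOn ulim Ω)
    (hL1 : Tendsto (fun k => ∫ x in Ω, |u k x - ulim x|) atTop (nhds 0))
    (ε : ℕ → ℝ) (ε₀ : ℝ) (hε : ∀ k, 0 ≤ ε k) (hε₀ : 0 ≤ ε₀)
    (hεlim : Tendsto ε atTop (nhds ε₀)) :
    Tendsto (fun k => ∫ x in Ω, psiSm p (ε k) ((u k x) ^ 2)) atTop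
      (nhds (∫ x in Ω, psiSm p ε₀ ((ulim x) ^ 2))) := by
  have : IsFiniteMeasure (volume.restrict Ω) := isFiniteMeasure_restrict.2 hfin.ne
  have hshift := tendsto_integral_psiSm_sq_sub hint hintl hp hp1.le hε hL1
  have hfixed := tendsto_integral_psiSm_sq_of_tendsto hintl hp hp1.le hε hε₀ hεlim
  simpa using hshift.add hfixed

theorem stmt7 (d : ℕ) (Ω : Set (Fin d → ℝ)) (hΩ : MeasurableSet Ω)
    (hfin : volume Ω < ⊤) (p : ℝ) (hp : 0 < p) (hp1 : p < 1)
    (u : ℕ → (Fin d → ℝ) → ℝ) (ulim : (Fin d → ℝ) → ℝ)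
    (hint : ∀ k, IntegrableOn (u k) Ω) (hintl : IntegrableOn ulim Ω)
    (hL1 : Tendsto (fun k => ∫ x in Ω, |u k x - ulim x|) atTop (nhds 0))
    (ε : ℕ → ℝ) (ε₀ : ℝ) (hε : ∀ k, 0 ≤ ε k) (hε₀ : 0 ≤ ε₀)
    (hεlim : Tendsto ε atTop (nhds ε₀)) :
    Tendsto (fun k => ∫ x in Ω, psiSm p (ε k) ((u k x) ^ 2)) atTop
      (nhds (∫ x in Ω, psiSm p ε₀ ((ulim x) ^ 2))) :=
  stmt7_general d Ω hfin p hp hp1 u ulim hint hintl hL1 ε ε₀ hε hε₀ hεlim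
end

section
/- Let V be a real Hilbert space with compact dense embedding into L²(Ω) for a bounded measurable Ω ⊂ ℝ^d, let F : V → ℝ be weakly lower semicontinuous and bounded below by an affine function (F(u) ≥ ⟨g,u⟩ + c for some g ∈ V*, c ∈ ℝ), let α > 0, β > 0, p ∈ (0,1). Then the problem min_{u ∈ V} F(u) + (α/2)‖u‖_V² + β∫_Ω |u(x)|^p dx attains its minimum. -/
open Set MeasureTheory Filter Topology

/-!
Direct method. Since `F` dominates an affine function, the quadratic term makes the energy
coercive, so a minimizing sequence is bounded and has a weakly convergent subsequence (sequential
Banach–Alaoglu on the separable closed span of the sequence, plus Riesz representation there).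
`F` and the norm are weakly lower semicontinuous. The nonconvex term `∫ |ι u| ^ p` is not, but
compactness of `ι` upgrades weak convergence in `V` to convergence in `L²`, hence to a.e.
convergence along a further subsequence, and Fatou's lemma then gives lower semicontinuity.
-/

section NormedSpace

variable {E : Type*} [NormedAddCommGroup E] [NormedSpace ℝ E]

def WeaklyTendsto (u : ℕ → E) (x : E) : Prop :=
  ∀ f : StrongDual ℝ E, Tendsto (fun n => f (u n)) atTop (𝓝 (f x))

theorem norm_le_of_weaklyTendsto {u : ℕ → E} {x : E} {r : ℝ} (hux : WeaklyTendsto u x)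
    (hr : Tendsto (fun n => ‖u n‖) atTop (𝓝 r)) : ‖x‖ ≤ r := by
  obtain ⟨f, hf, hfx⟩ := exists_dual_vector'' ℝ x
  refine le_of_tendsto_of_tendsto' (hfx ▸ hux f) hr fun n => ?_
  exact (le_abs_self _).trans ((f.le_opNorm _).trans (mul_le_of_le_one_left (norm_nonneg _) hf))

theorem IsCompactOperator.exists_subseq_tendsto_of_weaklyTendsto {F : Type*}
    [NormedAddCommGroup F] [NormedSpace ℝ F] {T : E →L[ℝ] F} (hT : IsCompactOperator T)
    {u : ℕ → E} {x : E} {R : ℝ} (hR : ∀ n, ‖u n‖ ≤ R) (hux : WeaklyTendsto u x) :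
    ∃ φ : ℕ → ℕ, StrictMono φ ∧ Tendsto (fun n => T (u (φ n))) atTop (𝓝 (T x)) := by
  obtain ⟨K, hK, hTK⟩ := hT.image_closedBall_subset_compact (f := (T : E →ₗ[ℝ] F)) R
  obtain ⟨y, -, φ, hφ, hy⟩ :=
    hK.tendsto_subseq fun n => hTK ⟨u n, mem_closedBall_zero_iff.2 (hR n), rfl⟩
  suffices y = T x from ⟨φ, hφ, this ▸ hy⟩
  refine (SeparatingDual.eq_iff_forall_dual_eq (R := ℝ)).2 fun f =>
    tendsto_nhds_unique ((f.continuous.tendsto y).comp hy) ?_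
  exact (hux (f.comp T)).comp hφ.tendsto_atTop

theorem quarter_mul_sq_norm_sub_le (g : StrongDual ℝ E) {α : ℝ} (hα : 0 < α) (u : E) :
    α / 4 * ‖u‖ ^ 2 - ‖g‖ ^ 2 / α ≤ g u + α / 2 * ‖u‖ ^ 2 := by
  have hgu : -(‖g‖ * ‖u‖) ≤ g u := neg_le_of_abs_le (g.le_opNorm u)
  have hamgm : ‖g‖ * ‖u‖ ≤ α / 4 * ‖u‖ ^ 2 + ‖g‖ ^ 2 / α := by
    rw [← sub_nonneg]
    have : α / 4 * ‖u‖ ^ 2 + ‖g‖ ^ 2 / α - ‖g‖ * ‖u‖ = (α * ‖u‖ - 2 * ‖g‖) ^ 2 / (4 * α) := by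
      field_simp
      ring
    rw [this]
    positivity
  linarith

end NormedSpace

open InnerProductSpace TopologicalSpace in
theorem exists_subseq_weaklyTendsto {V : Type*} [NormedAddCommGroup V] [InnerProductSpace ℝ V]
    [CompleteSpace V] {u : ℕ → V} {R : ℝ} (hR : ∀ n, ‖u n‖ ≤ R) :
    ∃ (φ : ℕ → ℕ) (x : V), StrictMono φ ∧ WeaklyTendsto (u ∘ φ) x := by
  let S := Submodule.span ℝ (range u)
  let W := S.topologicalClosure
  have : SeparableSpace W :=
    ((countable_range u).isSeparable.span (R := ℝ)).closure.separableSpace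
  have : CompleteSpace W := S.isClosed_topologicalClosure.completeSpace_coe
  let v : ℕ → W := fun n => ⟨u n, S.le_topologicalClosure (Submodule.subset_span ⟨n, rfl⟩)⟩
  obtain ⟨ℓ, -, φ, hφ, hℓ⟩ := WeakDual.isSeqCompact_closedBall (𝕜 := ℝ) (E := W) 0 R
    (x := fun n => (toDual ℝ W (v n)).toWeakDual) fun n => by
      simpa using ((toDual ℝ W).norm_map (v n)).trans_le (hR n)
  refine ⟨φ, (toDual ℝ W).symm ℓ.toStrongDual, hφ, fun f => ?_⟩
  set z := (toDual ℝ W).symm (f.comp W.subtypeL)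
  have hf : ∀ w : W, f w = toDual ℝ W w z := fun w => by
    rw [toDual_apply_apply, real_inner_comm, toDual_symm_apply]; rfl
  convert (tendsto_iff_forall_eval_tendsto_topDualPairing.mp hℓ z) using 1
  · funext n; exact hf (v (φ n))
  · rw [hf, LinearIsometryEquiv.apply_symm_apply]
    rfl

section Integral

variable {X : Type*} [MeasurableSpace X] {μ : Measure X}

theorem integral_le_of_ae_tendsto_of_tendsto_integral {f : ℕ → X → ℝ} {g : X → ℝ} {C : ℝ}
    (hf₀ : ∀ n, 0 ≤ᵐ[μ] f n) (hf : ∀ n, Integrable (f n) μ)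
    (hfg : ∀ᵐ x ∂μ, Tendsto (fun n => f n x) atTop (𝓝 (g x)))
    (hC : Tendsto (fun n => ∫ x, f n x ∂μ) atTop (𝓝 C)) : ∫ x, g x ∂μ ≤ C := by
  have hg₀ : 0 ≤ᵐ[μ] g := by
    filter_upwards [hfg, ae_all_iff.2 hf₀] with x hx hx₀
    exact ge_of_tendsto' hx hx₀
  have hfatou : ∫⁻ x, ENNReal.ofReal (g x) ∂μ ≤ ENNReal.ofReal C := by
    calc ∫⁻ x, ENNReal.ofReal (g x) ∂μ
        = ∫⁻ x, atTop.liminf fun n => ENNReal.ofReal (f n x) ∂μ :=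
          lintegral_congr_ae <| hfg.mono fun x hx => (ENNReal.tendsto_ofReal hx).liminf_eq.symm
      _ ≤ atTop.liminf fun n => ∫⁻ x, ENNReal.ofReal (f n x) ∂μ :=
          lintegral_liminf_le' fun n => (hf n).aemeasurable.ennreal_ofReal
      _ = ENNReal.ofReal C := by
          simp_rw [← ofReal_integral_eq_lintegral_ofReal (hf _) (hf₀ _)]
          exact (ENNReal.tendsto_ofReal hC).liminf_eq
  rw [integral_eq_lintegral_of_nonneg_ae hg₀
    (aestronglyMeasurable_of_tendsto_ae _ (fun n => (hf n).1) hfg)]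
  exact ENNReal.toReal_le_of_le_ofReal (ge_of_tendsto' hC fun n => integral_nonneg_of_ae (hf₀ n))
    hfatou

theorem MeasureTheory.Lp.integrable_abs_rpow [IsFiniteMeasure μ] {q : ENNReal} {p : ℝ}
    (hp : 0 < p) (hpq : ENNReal.ofReal p ≤ q) (f : Lp ℝ q μ) :
    Integrable (fun x => |f x| ^ p) μ := by
  simpa [ENNReal.toReal_ofReal hp.le] using
    ((Lp.memLp f).mono_exponent hpq).integrable_norm_rpow (by simpa using hp) ENNReal.ofReal_ne_top

theorem MeasureTheory.Lp.integral_abs_rpow_le_of_tendsto [IsFiniteMeasure μ] {q : ENNReal}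
    [Fact (1 ≤ q)] {p : ℝ} (hp : 0 < p) (hpq : ENNReal.ofReal p ≤ q)
    {f : ℕ → Lp ℝ q μ} {g : Lp ℝ q μ} {C : ℝ}
    (hfg : Tendsto f atTop (𝓝 g)) (hC : Tendsto (fun n => ∫ x, |f n x| ^ p ∂μ) atTop (𝓝 C)) :
    ∫ x, |g x| ^ p ∂μ ≤ C := by
  obtain ⟨φ, hφ, hae⟩ := (tendstoInMeasure_of_tendsto_Lp hfg).exists_seq_tendsto_ae
  refine integral_le_of_ae_tendsto_of_tendsto_integral (fun n => ae_of_all _ fun x => by positivity)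
    (fun n => Lp.integrable_abs_rpow hp hpq (f (φ n))) ?_ (hC.comp hφ.tendsto_atTop)
  filter_upwards [hae] with x hx
  exact ((continuous_abs.rpow_const fun _ => Or.inr hp.le).tendsto _).comp hx

theorem IsCompactOperator.integral_abs_rpow_le_of_weaklyTendsto {E : Type*}
    [NormedAddCommGroup E] [NormedSpace ℝ E] [IsFiniteMeasure μ] {q : ENNReal} [Fact (1 ≤ q)]
    {p : ℝ} (hp : 0 < p) (hpq : ENNReal.ofReal p ≤ q) {T : E →L[ℝ] Lp ℝ q μ}
    (hT : IsCompactOperator T) {u : ℕ → E} {x : E} {R C : ℝ} (hR : ∀ n, ‖u n‖ ≤ R)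
    (hux : WeaklyTendsto u x) (hC : Tendsto (fun n => ∫ y, |T (u n) y| ^ p ∂μ) atTop (𝓝 C)) :
    ∫ y, |T x y| ^ p ∂μ ≤ C := by
  obtain ⟨φ, hφ, hTu⟩ := hT.exists_subseq_tendsto_of_weaklyTendsto hR hux
  exact Lp.integral_abs_rpow_le_of_tendsto hp hpq hTu (hC.comp hφ.tendsto_atTop)

end Integral

theorem exists_forall_add_sq_norm_add_le {V : Type*} [NormedAddCommGroup V]
    [InnerProductSpace ℝ V] [CompleteSpace V] {F G : V → ℝ}
    (hF : ∀ (x : V) (u : ℕ → V), WeaklyTendsto u x → F x ≤ liminf (fun n => F (u n)) atTop)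
    (g : StrongDual ℝ V) (c : ℝ) (hbelow : ∀ u, g u + c ≤ F u) (hG₀ : ∀ u, 0 ≤ G u)
    (hG : ∀ (u : ℕ → V) (x : V) (R C : ℝ), (∀ n, ‖u n‖ ≤ R) → WeaklyTendsto u x →
      Tendsto (fun n => G (u n)) atTop (𝓝 C) → G x ≤ C)
    {α β : ℝ} (hα : 0 < α) (hβ : 0 < β) :
    ∃ x : V, ∀ u : V, F x + α / 2 * ‖x‖ ^ 2 + β * G x ≤ F u + α / 2 * ‖u‖ ^ 2 + β * G u := by
  set J : V → ℝ := fun u => F u + α / 2 * ‖u‖ ^ 2 + β * G u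
  have hJ : ∀ u, α / 4 * ‖u‖ ^ 2 + (c - ‖g‖ ^ 2 / α) ≤ J u := fun u => by
    simp only [J]
    linarith [quarter_mul_sq_norm_sub_le g hα u, hbelow u, mul_nonneg hβ.le (hG₀ u)]
  have hbdd : BddBelow (range J) := ⟨c - ‖g‖ ^ 2 / α, by
    rintro _ ⟨u, rfl⟩; nlinarith [hJ u, sq_nonneg ‖u‖]⟩
  obtain ⟨y, -, hlim, hy⟩ := exists_seq_tendsto_sInf (range_nonempty J) hbdd
  choose u hu using hy
  obtain rfl : y = J ∘ u := funext fun n => (hu n).symm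
  obtain ⟨M, hM⟩ := hlim.bddAbove_range
  set R := √(4 / α * (M - c + ‖g‖ ^ 2 / α))
  have hR : ∀ n, ‖u n‖ ≤ R := fun n => by
    refine Real.le_sqrt_of_sq_le ?_
    rw [div_mul_eq_mul_div, le_div_iff₀ hα]
    linarith [hJ (u n), (hM ⟨n, rfl⟩ : J (u n) ≤ M)]
  set K := (M - c + ‖g‖ ^ 2 / α) / β
  have hGK : ∀ n, G (u n) ≤ K := fun n => by
    rw [le_div_iff₀ hβ]
    have : J (u n) ≤ M := hM ⟨n, rfl⟩
    simp only [J] at this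
    nlinarith [quarter_mul_sq_norm_sub_le g hα (u n), hbelow (u n), sq_nonneg ‖u n‖]
  obtain ⟨φ, x, hφ, hx⟩ := exists_subseq_weaklyTendsto hR
  -- `F` is only lower semicontinuous in the `liminf` sense; once `‖v n‖` and `G (v n)` converge,
  -- `F (v n)` converges as the remainder of `J (v n)`.
  obtain ⟨⟨r, C⟩, -, ψ, hψ, hrC⟩ := tendsto_subseq_of_bounded
    ((Metric.isBounded_Icc 0 R).prod (Metric.isBounded_Icc 0 K))
    (x := fun n => (‖u (φ n)‖, G (u (φ n)))) fun n => ⟨⟨norm_nonneg _, hR _⟩, hG₀ _, hGK _⟩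
  set v := fun n => u (φ (ψ n))
  have hv : WeaklyTendsto v x := fun f => (hx f).comp hψ.tendsto_atTop
  have hr : Tendsto (fun n => ‖v n‖) atTop (𝓝 r) := hrC.fst_nhds
  have hC : Tendsto (fun n => G (v n)) atTop (𝓝 C) := hrC.snd_nhds
  have hFv : Tendsto (fun n => F (v n)) atTop (𝓝 (sInf (range J) - α / 2 * r ^ 2 - β * C)) := by
    refine (((hlim.comp (hφ.comp hψ).tendsto_atTop).sub ((hr.pow 2).const_mul _)).sub
      (hC.const_mul β)).congr fun n => ?_
    simp only [J, Function.comp_apply]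
    ring
  refine ⟨x, fun w => ?_⟩
  have hFx := (hF x v hv).trans_eq hFv.liminf_eq
  have hxr : ‖x‖ ≤ r := norm_le_of_weaklyTendsto hv hr
  have hGx : G x ≤ C := hG v x R C (fun n => hR _) hv hC
  calc J x ≤ (sInf (range J) - α / 2 * r ^ 2 - β * C) + α / 2 * r ^ 2 + β * C := by
        simp only [J]; gcongr
    _ = sInf (range J) := by ring
    _ ≤ J w := csInf_le hbdd ⟨w, rfl⟩

theorem stmt9_general (d : ℕ) (Ω : Set (Fin d → ℝ))
    (hbdd : Bornology.IsBounded Ω)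
    {V : Type*} [NormedAddCommGroup V] [InnerProductSpace ℝ V] [CompleteSpace V]
    (ι : V →L[ℝ] Lp ℝ 2 (volume.restrict Ω))
    (hcomp : IsCompactOperator ι)
    (F : V → ℝ)
    (hwlsc : ∀ (u : V) (un : ℕ → V),
      (∀ φ : V →L[ℝ] ℝ, Tendsto (fun n => φ (un n)) atTop (nhds (φ u))) →
      F u ≤ Filter.liminf (fun n => F (un n)) atTop)
    (g : V →L[ℝ] ℝ) (c : ℝ) (hbelow : ∀ u : V, g u + c ≤ F u)
    (α β p : ℝ) (hα : 0 < α) (hβ : 0 < β) (hp : 0 < p) (hp1 : p < 1) :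
    ∃ ubar : V, ∀ u : V,
      F ubar + α / 2 * ‖ubar‖ ^ 2 + β * ∫ x, |(ι ubar) x| ^ p ∂(volume.restrict Ω)
        ≤ F u + α / 2 * ‖u‖ ^ 2 + β * ∫ x, |(ι u) x| ^ p ∂(volume.restrict Ω) := by
  have : IsFiniteMeasure (volume.restrict Ω) := isFiniteMeasure_restrict.2 hbdd.measure_lt_top.ne
  have hp2 : ENNReal.ofReal p ≤ 2 := by
    rw [← ENNReal.ofReal_ofNat 2]
    exact ENNReal.ofReal_le_ofReal (by linarith)
  exact exists_forall_add_sq_norm_add_le hwlsc g c hbelow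
    (fun u => integral_nonneg fun _ => by positivity)
    (fun u x R C hR hux hC => hcomp.integral_abs_rpow_le_of_weaklyTendsto hp hp2 hR hux hC) hα hβ

theorem stmt9 (d : ℕ) (Ω : Set (Fin d → ℝ)) (hΩ : MeasurableSet Ω)
    (hbdd : Bornology.IsBounded Ω)
    {V : Type*} [NormedAddCommGroup V] [InnerProductSpace ℝ V] [CompleteSpace V]
    (ι : V →L[ℝ] Lp ℝ 2 (volume.restrict Ω)) (hinj : Function.Injective ι)
    (hcomp : IsCompactOperator ι) (hdense : DenseRange ι)
    (F : V → ℝ)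
    (hwlsc : ∀ (u : V) (un : ℕ → V),
      (∀ φ : V →L[ℝ] ℝ, Tendsto (fun n => φ (un n)) atTop (nhds (φ u))) →
      F u ≤ Filter.liminf (fun n => F (un n)) atTop)
    (g : V →L[ℝ] ℝ) (c : ℝ) (hbelow : ∀ u : V, g u + c ≤ F u)
    (α β p : ℝ) (hα : 0 < α) (hβ : 0 < β) (hp : 0 < p) (hp1 : p < 1) :
    ∃ ubar : V, ∀ u : V,
      F ubar + α / 2 * ‖ubar‖ ^ 2 + β * ∫ x, |(ι ubar) x| ^ p ∂(volume.restrict Ω)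
        ≤ F u + α / 2 * ‖u‖ ^ 2 + β * ∫ x, |(ι u) x| ^ p ∂(volume.restrict Ω) :=
  stmt9_general d Ω hbdd ι hcomp F hwlsc g c hbelow α β p hα hβ hp hp1
end
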